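/- Let q be any prime power and F = GF(q). Let W be the 4-dimensional subspace of quadratic forms over F spanned by X0X1, X0X2, X1X2 and X2^2 (the web of conics associated with the line-orbit o_5). Then among the q^3+q^2+q+1 conics of W there are exactly 1 double line, exactly 2q^2+q pairs of real lines, no pairs of imaginary lines, and exactly q^3−q^2 nonsingular conics. -/

import Mathlib

/-!
A form of the web is `a1 X0X1 + a2 X0X2 + a4 X1X2 + a5 X2^2`, with discriminant
`a1 (a2 a4 - a1 a5)`. If `a1 = 0` it is `X2 (a2 X0 + a4 X1 + a5 X2)`: a double line when
`a2 = a4 = 0`, a pair of real lines otherwise. If `a1 = 1` it is `X0X1 + u X0X2 + v X1X2 + w X2^2`,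
which is `(X0 + v X2)(X1 + u X2)` when `w = uv` and nonsingular otherwise. Counting the conics by
their representatives with first nonzero coefficient `1` gives `1`, `q^2 + (q^2 + q)`, `0` and
`q^2 (q - 1)`.
-/

open Matrix

namespace Conics

/-- Coefficient vector (a0,...,a5) of the product of two linear forms
`(b0*X0+b1*X1+b2*X2)*(c0*X0+c1*X1+c2*X2)`, where the quadratic form with
coefficient vector `a` is `a0*X0^2 + a1*X0*X1 + a2*X0*X2 + a3*X1^2 + a4*X1*X2 + a5*X2^2`. -/
def mulLin {F : Type} [Field F] (b c : Fin 3 → F) : Fin 6 → F :=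
  ![b 0 * c 0, b 0 * c 1 + b 1 * c 0, b 0 * c 2 + b 2 * c 0,
    b 1 * c 1, b 1 * c 2 + b 2 * c 1, b 2 * c 2]

/-- The discriminant of the quadratic form with coefficient vector `a`. -/
def disc {F : Type} [Field F] (a : Fin 6 → F) : F :=
  4 * a 0 * a 3 * a 5 + a 1 * a 2 * a 4 - a 0 * a 4 ^ 2 - a 3 * a 2 ^ 2 - a 5 * a 1 ^ 2

/-- `f_a` is a double line: `f_a = c * l^2` for a nonzero scalar `c` and nonzero linear form `l`. -/
def IsDoubleLine {F : Type} [Field F] (a : Fin 6 → F) : Prop :=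
  ∃ (c : F) (l : Fin 3 → F), c ≠ 0 ∧ l ≠ 0 ∧ a = c • mulLin l l

/-- `f_a` is a pair of (distinct) real lines: `f_a = l1 * l2` with neither linear form a scalar
multiple of the other. -/
def IsRealPair {F : Type} [Field F] (a : Fin 6 → F) : Prop :=
  ∃ l1 l2 : Fin 3 → F, (¬ ∃ t : F, l2 = t • l1) ∧ (¬ ∃ t : F, l1 = t • l2) ∧ a = mulLin l1 l2

/-- `f_a` is a pair of conjugate imaginary lines: singular, but not a product of two linear
forms over `F`. -/
def IsImagPair {F : Type} [Field F] (a : Fin 6 → F) : Prop :=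
  disc a = 0 ∧ ¬ ∃ l1 l2 : Fin 3 → F, a = mulLin l1 l2

/-- `f_a` is a nonsingular conic. -/
def IsNonsingular {F : Type} [Field F] (a : Fin 6 → F) : Prop :=
  disc a ≠ 0

/-- The number of conics of a given type `T` in a linear system `W` (a subspace of the space of
quadratic forms, identified with `F^6`): the number of 1-dimensional subspaces `⟨a⟩` of `W`,
`a ≠ 0`, such that `f_a` has type `T`. -/
noncomputable def numConics {F : Type} [Field F] (W : Submodule F (Fin 6 → F))
    (T : (Fin 6 → F) → Prop) : ℕ :=
  Set.ncard {P : Submodule F (Fin 6 → F) |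
    ∃ a : Fin 6 → F, a ≠ 0 ∧ a ∈ W ∧ T a ∧ P = Submodule.span F {a}}

/-- The symmetric 3×3 matrix associated with a point `y` of `PG(5,q)`. -/
def M {F : Type} [Field F] (y : Fin 6 → F) : Matrix (Fin 3) (Fin 3) F :=
  !![y 0, y 1, y 2; y 1, y 3, y 4; y 2, y 4, y 5]

/-- The pairing `B(a,y) = a0*y0 + ... + a5*y5`. -/
def Bform {F : Type} [Field F] (a y : Fin 6 → F) : F :=
  a 0 * y 0 + a 1 * y 1 + a 2 * y 2 + a 3 * y 3 + a 4 * y 4 + a 5 * y 5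

/-- The squab of conics associated with a (nonzero) point `y`: the hyperplane
`{a : B(a,y) = 0}` of the space of quadratic forms. -/
def squab {F : Type} [Field F] (y : Fin 6 → F) : Submodule F (Fin 6 → F) where
  carrier := {a | Bform a y = 0}
  add_mem' := by
    intro a b ha hb
    simp only [Set.mem_setOf_eq, Bform, Pi.add_apply] at *
    linear_combination ha + hb
  zero_mem' := by simp [Bform]
  smul_mem' := by
    intro c a ha
    simp only [Set.mem_setOf_eq, Bform, Pi.smul_apply, smul_eq_mul] at *
    linear_combination c * ha

variable {F : Type} [Field F]

section Normalized

variable {n : ℕ}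

/-- Every point of a projective space has exactly one normalized representative. -/
def IsNormalized (v : Fin n → F) : Prop :=
  ∃ i, v i = 1 ∧ ∀ j < i, v j = 0

theorem IsNormalized.ne_zero {v : Fin n → F} (hv : IsNormalized v) : v ≠ 0 := by
  obtain ⟨i, hi, -⟩ := hv
  rintro rfl
  exact zero_ne_one hi

theorem IsNormalized.eq_of_eq_smul {v w : Fin n → F} (hv : IsNormalized v)
    (hw : IsNormalized w) {c : F} (h : w = c • v) : w = v := by
  obtain ⟨i, hvi, hv0⟩ := hv
  obtain ⟨j, hwj, hw0⟩ := hw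
  have hw_apply (k : Fin n) : w k = c * v k := by rw [h]; rfl
  rcases lt_trichotomy i j with hij | rfl | hji
  · have hc : c = 0 := by simpa [hw_apply, hvi] using hw0 i hij
    simp [hw_apply, hc] at hwj
  · have hc : c = 1 := by simpa [hw_apply, hvi] using hwj
    rw [h, hc, one_smul]
  · simp [hw_apply, hv0 j hji] at hwj

theorem injective_span_singleton_of_isNormalized {ι : Type*} {r : ι → Fin n → F}
    (hr : Function.Injective r) (hn : ∀ i, IsNormalized (r i)) :
    Function.Injective fun i => Submodule.span F {r i} := by
  intro i j h
  obtain ⟨z, hz⟩ := Submodule.span_singleton_eq_span_singleton.mp h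
  exact (hr ((hn i).eq_of_eq_smul (hn j) (c := z) hz.symm)).symm

end Normalized

theorem numConics_eq_card {W : Submodule F (Fin 6 → F)} {T : (Fin 6 → F) → Prop} {ι : Type}
    (r : ι → Fin 6 → F) (hr : Function.Injective r) (hn : ∀ i, IsNormalized (r i))
    (hW : ∀ i, r i ∈ W) (hT : ∀ i, T (r i))
    (hcover : ∀ a, a ≠ 0 → a ∈ W → T a → ∃ i, ∃ c : F, c ≠ 0 ∧ a = c • r i) :
    numConics W T = Nat.card ι := by
  rw [numConics, ← Set.ncard_range_of_injective (injective_span_singleton_of_isNormalized hr hn)]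
  congr 1
  ext P
  constructor
  · rintro ⟨a, ha, haW, hTa, rfl⟩
    obtain ⟨i, c, hc, rfl⟩ := hcover a ha haW hTa
    exact ⟨i, (Submodule.span_singleton_smul_eq hc.isUnit _).symm⟩
  · rintro ⟨i, rfl⟩
    exact ⟨r i, (hn i).ne_zero, hW i, hT i, rfl⟩

theorem disc_smul (c : F) (a : Fin 6 → F) : disc (c • a) = c ^ 3 * disc a := by
  simp only [disc, Pi.smul_apply, smul_eq_mul]
  ring

theorem smul_mulLin (c : F) (b d : Fin 3 → F) : c • mulLin b d = mulLin (c • b) d := by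
  ext i
  fin_cases i <;> simp [mulLin, mul_add, mul_assoc]

theorem disc_mulLin (b d : Fin 3 → F) : disc (mulLin b d) = 0 := by
  simp only [disc, mulLin, cons_val_zero, cons_val_one, cons_val]
  ring

theorem not_exists_eq_smul_of_minor_ne_zero {n : ℕ} {l₁ l₂ : Fin n → F} {i j : Fin n}
    (h : l₁ i * l₂ j ≠ l₁ j * l₂ i) : ¬ ∃ t : F, l₂ = t • l₁ := by
  rintro ⟨t, rfl⟩
  apply h
  simp only [Pi.smul_apply, smul_eq_mul]
  ring

theorem isRealPair_mulLin_of_minor_ne_zero {l₁ l₂ : Fin 3 → F} {i j : Fin 3}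
    (h : l₁ i * l₂ j ≠ l₁ j * l₂ i) : IsRealPair (mulLin l₁ l₂) :=
  ⟨l₁, l₂, not_exists_eq_smul_of_minor_ne_zero h,
    not_exists_eq_smul_of_minor_ne_zero (i := i) (j := j) fun e => h (by linear_combination -e),
    rfl⟩

variable (F) in
def web : Submodule F (Fin 6 → F) :=
  Submodule.span F {![0, 1, 0, 0, 0, 0], ![0, 0, 1, 0, 0, 0], ![0, 0, 0, 0, 1, 0],
    ![0, 0, 0, 0, 0, 1]}

theorem mem_web_iff {a : Fin 6 → F} : a ∈ web F ↔ a 0 = 0 ∧ a 3 = 0 := by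
  constructor
  · intro h
    induction h using Submodule.span_induction with
    | mem x hx => rcases hx with rfl | rfl | rfl | rfl <;> simp
    | zero => simp
    | add x y _ _ hx hy => simp [hx.1, hx.2, hy.1, hy.2]
    | smul c x _ hx => simp [hx.1, hx.2]
  · rintro ⟨h0, h3⟩
    have ha : a = a 1 • ![0, 1, 0, 0, 0, 0] + a 2 • ![0, 0, 1, 0, 0, 0]
        + a 4 • ![0, 0, 0, 0, 1, 0] + a 5 • ![(0 : F), 0, 0, 0, 0, 1] := by
      ext i
      fin_cases i <;> simp [h0, h3]
    rw [ha]
    refine add_mem (add_mem (add_mem ?_ ?_) ?_) ?_ <;>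
      exact Submodule.smul_mem _ _ (Submodule.subset_span (by simp))

theorem disc_of_mem_web {a : Fin 6 → F} (ha : a ∈ web F) :
    disc a = a 1 * (a 2 * a 4 - a 1 * a 5) := by
  obtain ⟨h0, h3⟩ := mem_web_iff.mp ha
  simp only [disc, h0, h3]
  ring

/-- Normalized forms, named after their leading monomial:
`normX0X1 u v w = X0X1 + u X0X2 + v X1X2 + w X2^2`, and so on. -/
def normX0X1 (u v w : F) : Fin 6 → F := ![0, 1, u, 0, v, w]

def normX0X2 (u v : F) : Fin 6 → F := ![0, 0, 1, 0, u, v]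

def normX1X2 (u : F) : Fin 6 → F := ![0, 0, 0, 0, 1, u]

variable (F) in
def normX2sq : Fin 6 → F := ![0, 0, 0, 0, 0, 1]

theorem isNormalized_normX0X1 (u v w : F) : IsNormalized (normX0X1 u v w) :=
  ⟨1, rfl, fun j hj => by fin_cases j <;> first | rfl | exact absurd hj (by decide)⟩

theorem isNormalized_normX0X2 (u v : F) : IsNormalized (normX0X2 u v) :=
  ⟨2, rfl, fun j hj => by fin_cases j <;> first | rfl | exact absurd hj (by decide)⟩

theorem isNormalized_normX1X2 (u : F) : IsNormalized (normX1X2 u) :=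
  ⟨4, rfl, fun j hj => by fin_cases j <;> first | rfl | exact absurd hj (by decide)⟩

theorem isNormalized_normX2sq : IsNormalized (normX2sq F) :=
  ⟨5, rfl, fun j hj => by fin_cases j <;> first | rfl | exact absurd hj (by decide)⟩

theorem normX0X1_mem_web (u v w : F) : normX0X1 u v w ∈ web F := mem_web_iff.mpr ⟨rfl, rfl⟩

theorem normX0X2_mem_web (u v : F) : normX0X2 u v ∈ web F := mem_web_iff.mpr ⟨rfl, rfl⟩

theorem normX1X2_mem_web (u : F) : normX1X2 u ∈ web F := mem_web_iff.mpr ⟨rfl, rfl⟩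

theorem normX2sq_mem_web : normX2sq F ∈ web F := mem_web_iff.mpr ⟨rfl, rfl⟩

theorem normX0X1_mul_eq_mulLin (u v : F) : normX0X1 u v (u * v) = mulLin ![0, 1, u] ![1, 0, v] := by
  ext i
  fin_cases i <;> simp [normX0X1, mulLin]

theorem normX0X2_eq_mulLin (u v : F) : normX0X2 u v = mulLin ![0, 0, 1] ![1, u, v] := by
  ext i
  fin_cases i <;> simp [normX0X2, mulLin]

theorem normX1X2_eq_mulLin (u : F) : normX1X2 u = mulLin ![0, 0, 1] ![0, 1, u] := by
  ext i
  fin_cases i <;> simp [normX1X2, mulLin]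

theorem normX2sq_eq_mulLin : normX2sq F = mulLin ![0, 0, 1] ![0, 0, 1] := by
  ext i
  fin_cases i <;> simp [normX2sq, mulLin]

theorem disc_normX0X1 (u v w : F) : disc (normX0X1 u v w) = u * v - w := by
  simp [disc, normX0X1]

theorem eq_smul_normX0X1 {a : Fin 6 → F} (ha : a ∈ web F) (h1 : a 1 ≠ 0) :
    a = a 1 • normX0X1 (a 2 / a 1) (a 4 / a 1) (a 5 / a 1) := by
  obtain ⟨h0, h3⟩ := mem_web_iff.mp ha
  ext i
  fin_cases i <;> simp [normX0X1, h0, h3, mul_div_cancel₀ _ h1]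

theorem eq_smul_normX0X2 {a : Fin 6 → F} (ha : a ∈ web F) (h1 : a 1 = 0) (h2 : a 2 ≠ 0) :
    a = a 2 • normX0X2 (a 4 / a 2) (a 5 / a 2) := by
  obtain ⟨h0, h3⟩ := mem_web_iff.mp ha
  ext i
  fin_cases i <;> simp [normX0X2, h0, h1, h3, mul_div_cancel₀ _ h2]

theorem eq_smul_normX1X2 {a : Fin 6 → F} (ha : a ∈ web F) (h1 : a 1 = 0) (h2 : a 2 = 0)
    (h4 : a 4 ≠ 0) : a = a 4 • normX1X2 (a 5 / a 4) := by
  obtain ⟨h0, h3⟩ := mem_web_iff.mp ha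
  ext i
  fin_cases i <;> simp [normX1X2, h0, h1, h2, h3, mul_div_cancel₀ _ h4]

theorem eq_smul_normX2sq {a : Fin 6 → F} (ha : a ∈ web F) (h1 : a 1 = 0) (h2 : a 2 = 0)
    (h4 : a 4 = 0) : a = a 5 • normX2sq F := by
  obtain ⟨h0, h3⟩ := mem_web_iff.mp ha
  ext i
  fin_cases i <;> simp [normX2sq, h0, h1, h2, h3, h4]

theorem eq_smul_normX0X1_mul {a : Fin 6 → F} (ha : a ∈ web F) (h1 : a 1 ≠ 0) (hd : disc a = 0) :
    a = a 1 • normX0X1 (a 2 / a 1) (a 4 / a 1) (a 2 / a 1 * (a 4 / a 1)) := by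
  have h15 : a 5 / a 1 = a 2 / a 1 * (a 4 / a 1) := by
    rw [disc_of_mem_web ha, mul_eq_zero, or_iff_right h1, sub_eq_zero] at hd
    field_simp
    linear_combination -hd
  rw [← h15]
  exact eq_smul_normX0X1 ha h1
theorem isDoubleLine_normX2sq : IsDoubleLine (normX2sq F) :=
  ⟨1, ![0, 0, 1], one_ne_zero, fun h => by simpa using congrFun h 2,
    by rw [one_smul, normX2sq_eq_mulLin]⟩

theorem IsDoubleLine.exists_eq_smul_normX2sq {a : Fin 6 → F} (ha : a ∈ web F)
    (hd : IsDoubleLine a) : ∃ c : F, c ≠ 0 ∧ a = c • normX2sq F := by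
  obtain ⟨c, l, hc, hl, rfl⟩ := hd
  obtain ⟨h0, h3⟩ := mem_web_iff.mp ha
  simp only [mulLin, Pi.smul_apply, cons_val_zero, cons_val, smul_eq_mul, mul_eq_zero, hc,
    or_self, false_or] at h0 h3
  have hl2 : l 2 ≠ 0 := fun h2 => hl (by ext i; fin_cases i <;> simp [h0, h3, h2])
  refine ⟨c * l 2 ^ 2, mul_ne_zero hc (pow_ne_zero 2 hl2), ?_⟩
  ext i
  fin_cases i <;> simp [mulLin, normX2sq, h0, h3, sq]

theorem IsRealPair.disc_eq_zero {a : Fin 6 → F} (h : IsRealPair a) : disc a = 0 := by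
  obtain ⟨l₁, l₂, -, -, rfl⟩ := h
  exact disc_mulLin l₁ l₂

theorem not_isRealPair_smul_normX2sq {c : F} (hc : c ≠ 0) : ¬ IsRealPair (c • normX2sq F) := by
  rintro ⟨b, d, hbd, -, h⟩
  have e0 : b 0 * d 0 = 0 := by simpa [normX2sq, mulLin] using (congrFun h 0).symm
  have e2 : b 0 * d 2 + b 2 * d 0 = 0 := by simpa [normX2sq, mulLin] using (congrFun h 2).symm
  have e3 : b 1 * d 1 = 0 := by simpa [normX2sq, mulLin] using (congrFun h 3).symm
  have e4 : b 1 * d 2 + b 2 * d 1 = 0 := by simpa [normX2sq, mulLin] using (congrFun h 4).symm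
  have e5 : b 2 * d 2 = c := by simpa [normX2sq, mulLin] using (congrFun h 5).symm
  have hb2 : b 2 ≠ 0 := left_ne_zero_of_mul (e5 ▸ hc)
  have hd2 : d 2 ≠ 0 := right_ne_zero_of_mul (e5 ▸ hc)
  have hb0 : b 0 = 0 := by
    have : b 0 ^ 2 * d 2 = 0 := by linear_combination b 0 * e2 - b 2 * e0
    simpa [hd2] using this
  have hb1 : b 1 = 0 := by
    have : b 1 ^ 2 * d 2 = 0 := by linear_combination b 1 * e4 - b 2 * e3
    simpa [hd2] using this
  have hd0 : d 0 = 0 := by simpa [hb0, hb2] using e2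
  have hd1 : d 1 = 0 := by simpa [hb1, hb2] using e4
  refine hbd ⟨d 2 / b 2, ?_⟩
  ext i
  fin_cases i <;> simp [hb0, hb1, hd0, hd1, hb2]

theorem exists_eq_mulLin_of_disc_eq_zero {a : Fin 6 → F} (ha : a ∈ web F) (hd : disc a = 0) :
    ∃ l₁ l₂ : Fin 3 → F, a = mulLin l₁ l₂ := by
  by_cases h1 : a 1 = 0
  · obtain ⟨h0, h3⟩ := mem_web_iff.mp ha
    exact ⟨![0, 0, 1], ![a 2, a 4, a 5], by ext i; fin_cases i <;> simp [mulLin, h0, h1, h3]⟩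
  · refine ⟨a 1 • ![0, 1, a 2 / a 1], ![1, 0, a 4 / a 1], ?_⟩
    rw [← smul_mulLin, ← normX0X1_mul_eq_mulLin]
    exact eq_smul_normX0X1_mul ha h1 hd

theorem not_isImagPair_of_mem_web {a : Fin 6 → F} (ha : a ∈ web F) : ¬ IsImagPair a :=
  fun ⟨hd, hnot⟩ => hnot (exists_eq_mulLin_of_disc_eq_zero ha hd)

def realPairRep : (F × F) ⊕ (F × F) ⊕ F → Fin 6 → F
  | .inl (u, v) => normX0X1 u v (u * v)
  | .inr (.inl (u, v)) => normX0X2 u v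
  | .inr (.inr u) => normX1X2 u

theorem realPairRep_injective : Function.Injective (realPairRep (F := F)) := by
  rintro (⟨u, v⟩ | ⟨u, v⟩ | u) (⟨u', v'⟩ | ⟨u', v'⟩ | u') h <;>
    simp_all [realPairRep, normX0X1, normX0X2, normX1X2]

theorem isNormalized_realPairRep : ∀ i, IsNormalized (realPairRep (F := F) i)
  | .inl (u, v) => isNormalized_normX0X1 u v (u * v)
  | .inr (.inl (u, v)) => isNormalized_normX0X2 u v
  | .inr (.inr u) => isNormalized_normX1X2 u

theorem realPairRep_mem_web : ∀ i, realPairRep (F := F) i ∈ web F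
  | .inl (u, v) => normX0X1_mem_web u v (u * v)
  | .inr (.inl (u, v)) => normX0X2_mem_web u v
  | .inr (.inr u) => normX1X2_mem_web u

theorem isRealPair_realPairRep : ∀ i, IsRealPair (realPairRep (F := F) i)
  | .inl (u, v) => by
    rw [realPairRep, normX0X1_mul_eq_mulLin]
    exact isRealPair_mulLin_of_minor_ne_zero (i := 0) (j := 1) (by simp)
  | .inr (.inl (u, v)) => by
    rw [realPairRep, normX0X2_eq_mulLin]
    exact isRealPair_mulLin_of_minor_ne_zero (i := 0) (j := 2) (by simp)
  | .inr (.inr u) => by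
    rw [realPairRep, normX1X2_eq_mulLin]
    exact isRealPair_mulLin_of_minor_ne_zero (i := 1) (j := 2) (by simp)

theorem IsRealPair.exists_eq_smul_realPairRep {a : Fin 6 → F} (ha : a ∈ web F) (hne : a ≠ 0)
    (h : IsRealPair a) : ∃ i, ∃ c : F, c ≠ 0 ∧ a = c • realPairRep i := by
  by_cases h1 : a 1 = 0
  · by_cases h2 : a 2 = 0
    · by_cases h4 : a 4 = 0
      · have ha5 := eq_smul_normX2sq ha h1 h2 h4
        have h5 : a 5 ≠ 0 := fun h5 => hne (by rw [ha5, h5, zero_smul])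
        exact absurd (ha5 ▸ h) (not_isRealPair_smul_normX2sq h5)
      · exact ⟨.inr (.inr _), _, h4, eq_smul_normX1X2 ha h1 h2 h4⟩
    · exact ⟨.inr (.inl (_, _)), _, h2, eq_smul_normX0X2 ha h1 h2⟩
  · exact ⟨.inl (_, _), _, h1, eq_smul_normX0X1_mul ha h1 h.disc_eq_zero⟩

def nonsingularRep : F × F × Fˣ → Fin 6 → F
  | (u, v, s) => normX0X1 u v (u * v + s)

theorem isNonsingular_nonsingularRep (i : F × F × Fˣ) : IsNonsingular (nonsingularRep i) := by
  obtain ⟨u, v, s⟩ := i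
  simp [IsNonsingular, nonsingularRep, disc_normX0X1]

theorem IsNonsingular.exists_eq_smul_nonsingularRep {a : Fin 6 → F} (ha : a ∈ web F)
    (h : IsNonsingular a) : ∃ i, ∃ c : F, c ≠ 0 ∧ a = c • nonsingularRep i := by
  have h1 : a 1 ≠ 0 := fun h1 => h (by rw [disc_of_mem_web ha, h1, zero_mul])
  have hrep := eq_smul_normX0X1 ha h1
  set u := a 2 / a 1
  set v := a 4 / a 1
  set w := a 5 / a 1
  have hs : w - u * v ≠ 0 := by
    intro hs
    apply h
    rw [hrep, disc_smul, disc_normX0X1, ← neg_sub, hs, neg_zero, mul_zero]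
  refine ⟨(u, v, Units.mk0 _ hs), a 1, h1, ?_⟩
  rwa [nonsingularRep, Units.val_mk0, add_sub_cancel]

theorem numConics_web_isDoubleLine : numConics (web F) IsDoubleLine = 1 :=
  (numConics_eq_card (ι := Unit) (fun _ => normX2sq F) (fun _ _ _ => rfl)
    (fun _ => isNormalized_normX2sq) (fun _ => normX2sq_mem_web) (fun _ => isDoubleLine_normX2sq)
    fun _ _ ha hd => ⟨(), hd.exists_eq_smul_normX2sq ha⟩).trans Nat.card_unique

theorem numConics_web_isRealPair [Finite F] :
    numConics (web F) IsRealPair = 2 * Nat.card F ^ 2 + Nat.card F := by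
  rw [numConics_eq_card realPairRep realPairRep_injective isNormalized_realPairRep
    realPairRep_mem_web isRealPair_realPairRep fun _ hne ha h =>
      h.exists_eq_smul_realPairRep ha hne]
  simp only [Nat.card_sum, Nat.card_prod]
  ring

theorem numConics_web_isImagPair : numConics (web F) IsImagPair = 0 :=
  (numConics_eq_card (F := F) (ι := Empty) Empty.elim (fun i => i.elim) (fun i => i.elim)
    (fun i => i.elim) (fun i => i.elim) fun _ _ ha h =>
      absurd h (not_isImagPair_of_mem_web ha)).trans Nat.card_of_isEmpty

theorem numConics_web_isNonsingular :
    numConics (web F) IsNonsingular = Nat.card F ^ 3 - Nat.card F ^ 2 := by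
  rw [numConics_eq_card nonsingularRep ?_ (fun _ => isNormalized_normX0X1 _ _ _)
    (fun _ => normX0X1_mem_web _ _ _) isNonsingular_nonsingularRep
    fun _ _ ha h => h.exists_eq_smul_nonsingularRep ha]
  · rw [Nat.card_prod, Nat.card_prod, Nat.card_units, ← mul_assoc, Nat.mul_sub_one]
    ring_nf
  · rintro ⟨u, v, s⟩ ⟨u', v', s'⟩ h
    simp only [nonsingularRep, normX0X1, Matrix.vecCons_inj, true_and, and_true] at h
    obtain ⟨rfl, rfl, hs⟩ := h
    simpa [Units.ext_iff] using hs

/-- conic counts of the web `(X0X1, X0X2, X1X2, X2^2)` (line-orbit `o_5`). -/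
theorem web_o5_conic_counts (F : Type) [Field F] [Fintype F] (q : ℕ)
    (hq : Fintype.card F = q) (W : Submodule F (Fin 6 → F))
    (hW : W = Submodule.span F ({![0, 1, 0, 0, 0, 0], ![0, 0, 1, 0, 0, 0],
      ![0, 0, 0, 0, 1, 0], ![0, 0, 0, 0, 0, 1]} : Set (Fin 6 → F))) :
    numConics W IsDoubleLine = 1 ∧
    numConics W IsRealPair = 2 * q ^ 2 + q ∧
    numConics W IsImagPair = 0 ∧
    numConics W IsNonsingular = q ^ 3 - q ^ 2 := by
  subst hW hq
  rw [← Nat.card_eq_fintype_card]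
  exact ⟨numConics_web_isDoubleLine, numConics_web_isRealPair, numConics_web_isImagPair,
    numConics_web_isNonsingular⟩
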